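/- Let f : Y → S be a locally finitely-presented monomorphism of schemes with S integral Noetherian with generic point Spec K, and suppose Spec K → S factors through f. Then there exists a nonempty open U ⊆ Y such that f restricted to U is an open immersion onto a dense open subset of S. -/

import Mathlib

/-!
Since `f` is a monomorphism, so is `Spec 𝒪_{Y,y} → Y → S`, which makes the stalk map
`𝒪_{S,η} → 𝒪_{Y,y}` at a point `y` over the generic point `η` an epimorphism of rings. An
epimorphism out of a field is an isomorphism, so `Spec 𝒪_{Y,y} → Y` is a section of `f` over
`Spec 𝒪_{S,η}`; as `f` is locally of finite type, it spreads out to a section over an open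
`U ∋ η`. Then `f⁻¹ U → U` is a monomorphism with a section, hence an isomorphism.
-/

open AlgebraicGeometry CategoryTheory

lemma Algebra.IsEpi.surjective_algebraMap_of_field {K A : Type*} [Field K] [CommRing A]
    [Nontrivial A] [Algebra K A] [Algebra.IsEpi K A] : Function.Surjective (algebraMap K A) := by
  obtain ⟨r, hr⟩ := (Algebra.linearMap K A).exists_leftInverse_of_injective
    (LinearMap.ker_eq_bot.mpr (algebraMap K A).injective)
  have hr1 : r 1 = 1 := by simpa using LinearMap.congr_fun hr 1
  intro a
  refine ⟨r a, ?_⟩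
  -- apply `x ⊗ y ↦ r x • y` to `a ⊗ 1 = 1 ⊗ a`
  have := congrArg (_root_.TensorProduct.lift ((LinearMap.lsmul K A).compl₁₂ r LinearMap.id))
    ((Algebra.isEpi_iff_forall_one_tmul_eq K A).mp inferInstance a)
  simpa [hr1, Algebra.algebraMap_eq_smul_one] using this.symm

lemma CommRingCat.isIso_of_epi_of_isField {K A : CommRingCat} (f : K ⟶ A) [Epi f]
    (hK : IsField K) [Nontrivial A] : IsIso f := by
  let := hK.toField
  algebraize [f.hom]
  have : Algebra.IsEpi K A := CommRingCat.epi_iff_epi.mp ‹Epi f›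
  exact (ConcreteCategory.isIso_iff_bijective f).mpr
    ⟨f.hom.injective, Algebra.IsEpi.surjective_algebraMap_of_field⟩

namespace AlgebraicGeometry

lemma Scheme.Hom.epi_stalkMap_of_mono {X Y : Scheme} (f : X ⟶ Y) [Mono f] (x : X) :
    Epi (f.stalkMap x) := by
  refine ⟨fun {C} u v huv ↦ Spec.map_injective ?_⟩
  rw [← cancel_mono (X.fromSpecStalk x ≫ f), ← Scheme.SpecMap_stalkMap_fromSpecStalk,
    ← Spec.map_comp_assoc, ← Spec.map_comp_assoc, huv]

lemma exists_isIso_morphismRestrict_of_isIso_stalkMap {X Y : Scheme} (f : X ⟶ Y) [Mono f]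
    [LocallyOfFiniteType f] (x : X) [Y.IsGermInjectiveAt (f x)] [IsIso (f.stalkMap x)] :
    ∃ U : Y.Opens, f x ∈ U ∧ IsIso (f ∣_ U) := by
  obtain ⟨U, hxU, g, -, hg⟩ := spread_out_of_isGermInjective' (𝟙 Y) f
    (Spec.map (inv (f.stalkMap x)) ≫ X.fromSpecStalk x) (by
      rw [Category.comp_id, Category.assoc, ← Scheme.SpecMap_stalkMap_fromSpecStalk,
        ← Spec.map_comp_assoc, IsIso.hom_inv_id, Spec.map_id, Category.id_comp])
  rw [Category.comp_id] at hg
  have hrange : Set.range g.base ⊆ Set.range (f ⁻¹ᵁ U).ι.base := by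
    rw [Scheme.Opens.range_ι]
    rintro _ ⟨t, rfl⟩
    change (g ≫ f).base t ∈ U
    rw [hg]
    exact t.2
  have : Mono (f ∣_ U) := mono_of_mono_fac (morphismRestrict_ι f U)
  have : IsSplitEpi (f ∣_ U) := ⟨⟨IsOpenImmersion.lift (f ⁻¹ᵁ U).ι g hrange, by
    rw [← cancel_mono U.ι, Category.assoc, morphismRestrict_ι, IsOpenImmersion.lift_fac_assoc,
      hg, Category.id_comp]⟩⟩
  exact ⟨U, hxU, isIso_of_mono_of_isSplitEpi _⟩

end AlgebraicGeometry

theorem stmt8_general {Y S : AlgebraicGeometry.Scheme} (f : Y ⟶ S) [Mono f]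
    [LocallyOfFinitePresentation f] [IsIntegral S]
    (hgen : genericPoint S ∈ Set.range f.base) :
    ∃ U : Y.Opens, U ≠ ⊥ ∧ AlgebraicGeometry.IsOpenImmersion (U.ι ≫ f) ∧
      Dense (Set.range (U.ι ≫ f).base) := by
  obtain ⟨y, hy⟩ := hgen
  have : Epi (f.stalkMap y) := f.epi_stalkMap_of_mono y
  have : IsIso (f.stalkMap y) := CommRingCat.isIso_of_epi_of_isField _
    (by rw [hy]; exact Field.toIsField S.functionField)
  obtain ⟨U, hyU, _⟩ := exists_isIso_morphismRestrict_of_isIso_stalkMap f y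
  refine ⟨f ⁻¹ᵁ U, (TopologicalSpace.Opens.ne_bot_iff_nonempty _).mpr ⟨y, hyU⟩, ?_, ?_⟩
  · rw [← morphismRestrict_ι]
    infer_instance
  · exact (dense_iff_closure_eq.mpr (genericPoint_closure _)).mono
      (Set.singleton_subset_iff.mpr ⟨⟨y, hyU⟩, hy⟩)

/-- Let `f : Y → S` be a locally finitely-presented monomorphism of schemes with `S` integral
Noetherian, and suppose the generic point of `S` lies in the image of `f` (i.e. `Spec K → S`
factors through `f`, `f` being a monomorphism).  Then there exists a nonempty open `U ⊆ Y`
such that `f` restricted to `U` is an open immersion onto a dense open subset of `S`. -/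
theorem stmt8 {Y S : AlgebraicGeometry.Scheme} (f : Y ⟶ S) [Mono f]
    [LocallyOfFinitePresentation f] [IsIntegral S] [AlgebraicGeometry.IsNoetherian S]
    [IrreducibleSpace S]
    (hgen : genericPoint S ∈ Set.range f.base) :
    ∃ U : Y.Opens, U ≠ ⊥ ∧ AlgebraicGeometry.IsOpenImmersion (U.ι ≫ f) ∧
      Dense (Set.range (U.ι ≫ f).base) :=
  stmt8_general f hgen
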